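/- arXiv:2508.11427 — 2 statements merged into one kernel-verified Lean document; each statement's English description precedes it below -/
import Mathlib

section
/- For a triangle with circumradius R, inradius r, and distance d between the circumcenter and incenter, Euler's relation holds: R² − d² = 2Rr. -/
open Metric
open RealInnerProductSpace

private lemma quad_min_ineq {F : Type*} [NormedAddCommGroup F] [InnerProductSpace ℝ F]
    {w v : F} {r t : ℝ} (hfar : ∀ s : ℝ, 0 ≤ s → s ≤ 1 → r ≤ ‖w - s • v‖)
    (ht0 : 0 ≤ t) (ht1 : t < 1) (hmin : ‖w - t • v‖ = r) :
    ⟪w - t • v, v⟫ ≤ 0 := by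
  by_contra hD'
  push_neg at hD'
  have hv : v ≠ 0 := by
    rintro rfl
    rw [inner_zero_right] at hD'
    exact lt_irrefl 0 hD'
  have hV : 0 < ‖v‖ ^ 2 := by
    have := norm_pos_iff.mpr hv
    positivity
  set D : ℝ := ⟪w - t • v, v⟫ with hDdef
  set ε : ℝ := min (1 - t) (D / ‖v‖ ^ 2) with hεdef
  have hε : 0 < ε := lt_min (by linarith) (div_pos hD' hV)
  have hεt : t + ε ≤ 1 := by
    have := min_le_left (1 - t) (D / ‖v‖ ^ 2)
    have : ε ≤ 1 - t := this
    linarith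
  have hεV : ε * ‖v‖ ^ 2 ≤ D := by
    have h1 : ε ≤ D / ‖v‖ ^ 2 := min_le_right _ _
    calc ε * ‖v‖ ^ 2 ≤ (D / ‖v‖ ^ 2) * ‖v‖ ^ 2 := mul_le_mul_of_nonneg_right h1 (le_of_lt hV)
      _ = D := div_mul_cancel₀ _ (ne_of_gt hV)
  have hmem := hfar (t + ε) (by linarith) hεt
  have hexp : ‖w - (t + ε) • v‖ ^ 2 = r ^ 2 - 2 * (ε * D) + ε ^ 2 * ‖v‖ ^ 2 := by
    have h2 : w - (t + ε) • v = (w - t • v) - ε • v := by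
      rw [add_smul]; abel
    rw [h2, norm_sub_sq_real, real_inner_smul_right, norm_smul, hmin, ← hDdef]
    rw [mul_pow, Real.norm_eq_abs, sq_abs]
  have hr0 : 0 ≤ r := hmin ▸ norm_nonneg _
  have hsq : r ^ 2 ≤ ‖w - (t + ε) • v‖ ^ 2 := by
    have := mul_self_le_mul_self hr0 hmem
    nlinarith [this]
  have h3 : ε * (ε * ‖v‖ ^ 2) ≤ ε * D := mul_le_mul_of_nonneg_left hεV hε.le
  nlinarith [mul_pos hε hD']

private lemma side_perp_eq {F : Type*} [NormedAddCommGroup F] [InnerProductSpace ℝ F]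
    {A B C I : F} {r al be ga : ℝ} (hr : 0 < r)
    (hal : 0 ≤ al) (hbe : 0 ≤ be) (hga : 0 ≤ ga) (hsum : al + be + ga = 1)
    (hIdef : I = al • A + be • B + ga • C)
    (hAB : ∀ s : ℝ, 0 ≤ s → s ≤ 1 → r ≤ ‖(I - B) - s • (A - B)‖)
    (hBCfar : ∀ s : ℝ, 0 ≤ s → s ≤ 1 → r ≤ ‖(I - B) - s • (C - B)‖)
    (hCA : ∀ s : ℝ, 0 ≤ s → s ≤ 1 → r ≤ ‖(I - C) - s • (A - C)‖)
    (hBCatt : ∃ t : ℝ, 0 ≤ t ∧ t ≤ 1 ∧ ‖(I - B) - t • (C - B)‖ = r) :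
    ‖I - B‖ ^ 2 * ‖C - B‖ ^ 2 - ⟪I - B, C - B⟫ ^ 2 = r ^ 2 * ‖C - B‖ ^ 2 := by
  have hIB : I - B = al • (A - B) + ga • (C - B) := by
    have hbe' : be = 1 - al - ga := by linarith
    rw [hIdef, hbe']
    module
  have hIC : I - C = al • (A - C) + be • (B - C) := by
    have hga' : ga = 1 - al - be := by linarith
    rw [hIdef, hga']
    module
  obtain ⟨t, ht0, ht1, hatt⟩ := hBCatt
  have hfarrev : ∀ s : ℝ, 0 ≤ s → s ≤ 1 → r ≤ ‖(I - C) - s • (B - C)‖ := by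
    intro s h0 h1
    have heq : (I - C) - s • (B - C) = (I - B) - (1 - s) • (C - B) := by module
    rw [heq]
    exact hBCfar (1 - s) (by linarith) (by linarith)
  rcases eq_or_lt_of_le ht1 with h1 | h1
  · -- t = 1 : nearest point is C; derive a contradiction
    exfalso
    have hIC_eq : (I - B) - t • (C - B) = I - C := by rw [h1]; module
    have hnC : ‖I - C‖ = r := by rw [← hIC_eq]; exact hatt
    have hd1 : ⟪I - C, B - C⟫ ≤ 0 := by
      have h := quad_min_ineq hfarrev (le_refl (0:ℝ)) one_pos (by simpa using hnC)
      simpa using h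
    have hd2 : ⟪I - C, A - C⟫ ≤ 0 := by
      have h := quad_min_ineq hCA (le_refl (0:ℝ)) one_pos (by simpa using hnC)
      simpa using h
    have hip : ⟪I - C, I - C⟫ = al * ⟪I - C, A - C⟫ + be * ⟪I - C, B - C⟫ := by
      nth_rewrite 2 [hIC]
      rw [inner_add_right, real_inner_smul_right, real_inner_smul_right]
    have hn : ⟪I - C, I - C⟫ = r ^ 2 := by
      rw [real_inner_self_eq_norm_sq, hnC]
    nlinarith [mul_nonpos_of_nonneg_of_nonpos hal hd2, mul_nonpos_of_nonneg_of_nonpos hbe hd1]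
  · have hD1 : ⟪(I - B) - t • (C - B), C - B⟫ ≤ 0 := quad_min_ineq hBCfar ht0 h1 hatt
    rcases eq_or_lt_of_le ht0 with h0 | h0
    · -- t = 0 : nearest point is B; derive a contradiction
      exfalso
      have hIB_eq : (I - B) - t • (C - B) = I - B := by rw [← h0]; simp
      have hnB : ‖I - B‖ = r := by rw [← hIB_eq]; exact hatt
      have hd1 : ⟪I - B, C - B⟫ ≤ 0 := by rw [← hIB_eq]; exact hD1
      have hd2 : ⟪I - B, A - B⟫ ≤ 0 := by
        have h := quad_min_ineq hAB (le_refl (0:ℝ)) one_pos (by simpa using hnB)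
        simpa using h
      have hip : ⟪I - B, I - B⟫ = al * ⟪I - B, A - B⟫ + ga * ⟪I - B, C - B⟫ := by
        nth_rewrite 2 [hIB]
        rw [inner_add_right, real_inner_smul_right, real_inner_smul_right]
      have hn : ⟪I - B, I - B⟫ = r ^ 2 := by
        rw [real_inner_self_eq_norm_sq, hnB]
      nlinarith [mul_nonpos_of_nonneg_of_nonpos hal hd2, mul_nonpos_of_nonneg_of_nonpos hga hd1]
    · -- 0 < t < 1 : the nearest point is the orthogonal foot
      have hD2 : ⟪(I - C) - (1 - t) • (B - C), B - C⟫ ≤ 0 := by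
        apply quad_min_ineq hfarrev (by linarith) (by linarith)
        have heq : (I - C) - (1 - t) • (B - C) = (I - B) - t • (C - B) := by module
        rw [heq]; exact hatt
      have hD2' : 0 ≤ ⟪(I - B) - t • (C - B), C - B⟫ := by
        have heq : (I - C) - (1 - t) • (B - C) = (I - B) - t • (C - B) := by module
        rw [heq] at hD2
        have heq2 : (B - C : F) = -(C - B) := by module
        rw [heq2, inner_neg_right] at hD2
        linarith
      have hD : ⟪(I - B) - t • (C - B), C - B⟫ = 0 := le_antisymm hD1 hD2'
      have h5 : ⟪I - B, C - B⟫ = t * ‖C - B‖ ^ 2 := by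
        rw [inner_sub_left, real_inner_smul_left, real_inner_self_eq_norm_sq] at hD
        linarith
      have h6 : ‖I - B‖ ^ 2 - 2 * (t * ⟪I - B, C - B⟫) + t ^ 2 * ‖C - B‖ ^ 2 = r ^ 2 := by
        have h7 : ‖(I - B) - t • (C - B)‖ ^ 2 = r ^ 2 := by rw [hatt]
        rw [norm_sub_sq_real, real_inner_smul_right, norm_smul, mul_pow, Real.norm_eq_abs, sq_abs] at h7
        exact h7
      linear_combination (t * ‖C - B‖ ^ 2 - ⟪I - B, C - B⟫) * h5 + ‖C - B‖ ^ 2 * h6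

private lemma sq_eq_of_nonneg {x y : ℝ} (hx : 0 ≤ x) (hy : 0 ≤ y) (h : x ^ 2 = y ^ 2) :
    x = y := by
  rw [← Real.sqrt_sq hx, ← Real.sqrt_sq hy, h]

/-- Euler's relation for a triangle: R² − d² = 2Rr, where R is the circumradius,
r the inradius, and d the distance between circumcenter and incenter. -/
theorem euler_triangle_relation (A B C : EuclideanSpace ℝ (Fin 2))
    (hABC : ¬ Collinear ℝ ({A, B, C} : Set (EuclideanSpace ℝ (Fin 2))))
    (O I : EuclideanSpace ℝ (Fin 2)) (R r : ℝ) (hr : 0 < r)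
    (hOA : dist O A = R) (hOB : dist O B = R) (hOC : dist O C = R)
    (hI : I ∈ interior (convexHull ℝ ({A, B, C} : Set (EuclideanSpace ℝ (Fin 2)))))
    (hIa : infDist I (segment ℝ A B) = r)
    (hIb : infDist I (segment ℝ B C) = r)
    (hIc : infDist I (segment ℝ C A) = r) :
    R ^ 2 - (dist O I) ^ 2 = 2 * R * r := by
  -- B ≠ C
  have hBCne : B ≠ C := by
    rintro rfl
    apply hABC
    rw [show ({A, B, B} : Set (EuclideanSpace ℝ (Fin 2))) = {A, B} from by rw [Set.pair_eq_singleton]]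
    exact collinear_pair ℝ A B
  -- barycentric coordinates of I
  have hIhull : I ∈ convexHull ℝ ({A, B, C} : Set (EuclideanSpace ℝ (Fin 2))) := interior_subset hI
  rw [convexHull_insert ⟨B, by simp⟩, mem_convexJoin] at hIhull
  obtain ⟨A', hA', z, hz, hseg⟩ := hIhull
  rw [Set.mem_singleton_iff] at hA'
  subst A'
  rw [convexHull_pair] at hz
  obtain ⟨p, q, hp, hq, hpq, rfl⟩ := hz
  obtain ⟨u, w, hu, hw, huw, hI'⟩ := hseg
  obtain ⟨al, be, ga, hal, hbe, hga, hsum, hIdef⟩ :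
      ∃ al be ga : ℝ, 0 ≤ al ∧ 0 ≤ be ∧ 0 ≤ ga ∧ al + be + ga = 1 ∧
        I = al • A + be • B + ga • C := by
    refine ⟨u, w * p, w * q, hu, mul_nonneg hw hp, mul_nonneg hw hq, by nlinarith, ?_⟩
    rw [← hI']
    module
  clear hI' hu hw huw hp hq hpq hI
  -- distance lower bounds and attainment in vector form
  have hfar : ∀ X Y : EuclideanSpace ℝ (Fin 2), infDist I (segment ℝ X Y) = r →
      ∀ s : ℝ, 0 ≤ s → s ≤ 1 → r ≤ ‖(I - X) - s • (Y - X)‖ := by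
    intro X Y h s h0 h1
    have hx : X + s • (Y - X) ∈ segment ℝ X Y := by
      rw [segment_eq_image']
      exact ⟨s, ⟨h0, h1⟩, rfl⟩
    have hle := infDist_le_dist_of_mem (x := I) hx
    rw [h] at hle
    have he : dist I (X + s • (Y - X)) = ‖(I - X) - s • (Y - X)‖ := by
      rw [dist_eq_norm]
      congr 1
      module
    linarith [he ▸ hle]
  have hatt : ∀ X Y : EuclideanSpace ℝ (Fin 2), infDist I (segment ℝ X Y) = r →
      ∃ t : ℝ, 0 ≤ t ∧ t ≤ 1 ∧ ‖(I - X) - t • (Y - X)‖ = r := by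
    intro X Y h
    have hc : IsCompact (segment ℝ X Y) := by
      rw [segment_eq_image']
      exact isCompact_Icc.image (by fun_prop)
    obtain ⟨P, hP, hdP⟩ := hc.exists_infDist_eq_dist ⟨X, left_mem_segment ℝ X Y⟩ I
    rw [segment_eq_image'] at hP
    obtain ⟨t, ⟨h0, h1⟩, rfl⟩ := hP
    refine ⟨t, h0, h1, ?_⟩
    rw [← h, hdP, dist_eq_norm]
    congr 1
    module
  have hIa' : infDist I (segment ℝ B A) = r := by rw [segment_symm]; exact hIa
  have hIb' : infDist I (segment ℝ C B) = r := by rw [segment_symm]; exact hIb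
  have hIc' : infDist I (segment ℝ A C) = r := by rw [segment_symm]; exact hIc
  -- the three side equations
  have EBC := side_perp_eq hr hal hbe hga hsum hIdef
    (hfar B A hIa') (hfar B C hIb) (hfar C A hIc) (hatt B C hIb)
  have ECA := side_perp_eq (A := B) (B := C) (C := A) hr hbe hga hal (by linarith)
    (by rw [hIdef]; module)
    (hfar C B hIb') (hfar C A hIc) (hfar A B hIa) (hatt C A hIc)
  have EAB := side_perp_eq (A := C) (B := A) (C := B) hr hga hal hbe (by linarith)
    (by rw [hIdef]; module)
    (hfar A C hIc') (hfar A B hIa) (hfar B C hIb) (hatt A B hIa)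
  clear hfar hatt hIa hIb hIc hIa' hIb' hIc' hABC
  -- pass to coordinates
  have coord_inner : ∀ x y : EuclideanSpace ℝ (Fin 2), ⟪x, y⟫ = x 0 * y 0 + x 1 * y 1 := by
    intro x y
    simp [PiLp.inner_apply, RCLike.inner_apply, Fin.sum_univ_two]
    ring
  have coord_norm : ∀ x : EuclideanSpace ℝ (Fin 2), ‖x‖ ^ 2 = x 0 ^ 2 + x 1 ^ 2 := by
    intro x
    rw [← real_inner_self_eq_norm_sq, coord_inner]
    ring
  have coord_sub : ∀ (x y : EuclideanSpace ℝ (Fin 2)) (i : Fin 2), (x - y) i = x i - y i :=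
    fun _ _ _ => rfl
  have coord_dist : ∀ x y : EuclideanSpace ℝ (Fin 2),
      (dist x y) ^ 2 = (x 0 - y 0) ^ 2 + (x 1 - y 1) ^ 2 := by
    intro x y
    rw [dist_eq_norm, coord_norm, coord_sub, coord_sub]
  have hA : (A 0 - O 0) ^ 2 + (A 1 - O 1) ^ 2 = R ^ 2 := by
    have h := coord_dist O A
    rw [hOA] at h
    linear_combination -h
  have hB : (B 0 - O 0) ^ 2 + (B 1 - O 1) ^ 2 = R ^ 2 := by
    have h := coord_dist O B
    rw [hOB] at h
    linear_combination -h
  have hC : (C 0 - O 0) ^ 2 + (C 1 - O 1) ^ 2 = R ^ 2 := by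
    have h := coord_dist O C
    rw [hOC] at h
    linear_combination -h
  obtain ⟨a, hadef⟩ : ∃ x : ℝ, x = dist B C := ⟨_, rfl⟩
  obtain ⟨b, hbdef⟩ : ∃ x : ℝ, x = dist C A := ⟨_, rfl⟩
  obtain ⟨c, hcdef⟩ : ∃ x : ℝ, x = dist A B := ⟨_, rfl⟩
  have ha2 : a ^ 2 = (B 0 - C 0) ^ 2 + (B 1 - C 1) ^ 2 := by rw [hadef]; exact coord_dist B C
  have hb2 : b ^ 2 = (C 0 - A 0) ^ 2 + (C 1 - A 1) ^ 2 := by rw [hbdef]; exact coord_dist C A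
  have hc2 : c ^ 2 = (A 0 - B 0) ^ 2 + (A 1 - B 1) ^ 2 := by rw [hcdef]; exact coord_dist A B
  have ha0 : 0 ≤ a := hadef ▸ dist_nonneg
  have hb0 : 0 ≤ b := hbdef ▸ dist_nonneg
  have hc0 : 0 ≤ c := hcdef ▸ dist_nonneg
  have hapos : 0 < a := hadef ▸ dist_pos.mpr hBCne
  have hI0 : I 0 = al * A 0 + be * B 0 + ga * C 0 := by
    rw [hIdef]; rfl
  have hI1 : I 1 = al * A 1 + be * B 1 + ga * C 1 := by
    rw [hIdef]; rfl
  have hd2 : (dist O I) ^ 2 = (O 0 - I 0) ^ 2 + (O 1 - I 1) ^ 2 := coord_dist O I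
  -- convert the side equations to coordinates
  have ce : ∀ X Y Z : EuclideanSpace ℝ (Fin 2),
      ‖X - Y‖ ^ 2 * ‖Z - Y‖ ^ 2 - ⟪X - Y, Z - Y⟫ ^ 2 = r ^ 2 * ‖Z - Y‖ ^ 2 →
      ((X 0 - Y 0) ^ 2 + (X 1 - Y 1) ^ 2) * ((Z 0 - Y 0) ^ 2 + (Z 1 - Y 1) ^ 2)
        - ((X 0 - Y 0) * (Z 0 - Y 0) + (X 1 - Y 1) * (Z 1 - Y 1)) ^ 2
        = r ^ 2 * ((Z 0 - Y 0) ^ 2 + (Z 1 - Y 1) ^ 2) := by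
    intro X Y Z h
    have e1 := coord_norm (X - Y)
    have e2 := coord_norm (Z - Y)
    have e3 := coord_inner (X - Y) (Z - Y)
    simp only [coord_sub] at e1 e2 e3
    rw [e1, e2, e3] at h
    exact h
  have EBC := ce I B C EBC
  have ECA := ce I C A ECA
  have EAB := ce I A B EAB
  have halpha : al ^ 2 * ((B 0 - A 0) * (C 1 - A 1) - (B 1 - A 1) * (C 0 - A 0)) ^ 2 = r ^ 2 * a ^ 2 := by
    linear_combination (norm := ring1) (1) * EBC +
      (-r^2) * ha2 +
      ((-2)*(B 1)*(C 0)*(C 1) + (2)*(B 1)^2*(C 0) + (2)*(B 0)*(C 1)^2 + (-2)*(B 0)*(B 1)*(C 1) + (-1)*ga*(C 0)*(C 1)^2 + (2)*ga*(B 1)*(C 0)*(C 1) + (-1)*ga*(B 1)^2*(C 0) + (-1)*be*(B 0)*(C 1)^2 + (2)*be*(B 0)*(B 1)*(C 1) + (-1)*be*(B 0)*(B 1)^2 + (-1)*al*(A 0)*(C 1)^2 + (2)*al*(A 0)*(B 1)*(C 1) + (-1)*al*(A 0)*(B 1)^2 + (2)*(I 1)*(C 0)*(C 1) + (-2)*(I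 1)*(B 1)*(C 0) + (-2)*(I 1)*(B 0)*(C 1) + (2)*(I 1)*(B 0)*(B 1) + (-1)*(I 0)*(C 1)^2 + (2)*(I 0)*(B 1)*(C 1) + (-1)*(I 0)*(B 1)^2) * hI0 +
      ((2)*(B 1)*(C 0)^2 + (-2)*(B 0)*(C 0)*(C 1) + (-2)*(B 0)*(B 1)*(C 0) + (2)*(B 0)^2*(C 1) + ga*(C 0)^2*(C 1) + (-2)*ga*(B 1)*(C 0)^2 + (2)*ga*(B 0)*(B 1)*(C 0) + (-1)*ga*(B 0)^2*(C 1) + (-1)*be*(B 1)*(C 0)^2 + (2)*be*(B 0)*(C 0)*(C 1) + (-2)*be*(B 0)^2*(C 1) + be*(B 0)^2*(B 1) + (-1)*al*(A 1)*(C 0)^2 + (2)*al*(A 1)*(B 0)*(C 0) + (-1)*al*(A 1)*(B 0)^2 + (2)*al*(A 0)*(C 0)*(C 1) + (-2)*al*(A 0)*(B 1)*(C 0) + (-2)*al*(A 0)*(B 0)*(C 1) + (2)*al*(A 0)*(B 0)*(B 1) + (-1)*(I 1)*(C 0)^2 + (2)*(I 1)*(B 0)*(C 0) + (-1)*(I 1)*(B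 0)^2) * hI1 +
      ((B 1)^2*(C 0)^2 + (-2)*(B 0)*(B 1)*(C 0)*(C 1) + (B 0)^2*(C 1)^2 + (-1)*ga*(B 1)^2*(C 0)^2 + (2)*ga*(B 0)*(B 1)*(C 0)*(C 1) + (-1)*ga*(B 0)^2*(C 1)^2 + (-1)*be*(B 1)^2*(C 0)^2 + (2)*be*(B 0)*(B 1)*(C 0)*(C 1) + (-1)*be*(B 0)^2*(C 1)^2 + al*(B 1)^2*(C 0)^2 + (-2)*al*(B 0)*(B 1)*(C 0)*(C 1) + al*(B 0)^2*(C 1)^2 + (-2)*al*(A 1)*(B 1)*(C 0)^2 + (2)*al*(A 1)*(B 0)*(C 0)*(C 1) + (2)*al*(A 1)*(B 0)*(B 1)*(C 0) + (-2)*al*(A 1)*(B 0)^2*(C 1) + (2)*al*(A 0)*(B 1)*(C 0)*(C 1) + (-2)*al*(A 0)*(B 1)^2*(C 0) + (-2)*al*(A 0)*(B 0)*(C 1)^2 + (2)*al*(A 0)*(B 0)*(B 1)*(C 1)) * hsum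
  have hbeta : be ^ 2 * ((B 0 - A 0) * (C 1 - A 1) - (B 1 - A 1) * (C 0 - A 0)) ^ 2 = r ^ 2 * b ^ 2 := by
    linear_combination (norm := ring1) (1) * ECA +
      (-r^2) * hb2 +
      ((-2)*(A 1)*(C 0)*(C 1) + (2)*(A 1)^2*(C 0) + (2)*(A 0)*(C 1)^2 + (-2)*(A 0)*(A 1)*(C 1) + (-1)*ga*(C 0)*(C 1)^2 + (2)*ga*(A 1)*(C 0)*(C 1) + (-1)*ga*(A 1)^2*(C 0) + (-1)*be*(B 0)*(C 1)^2 + (2)*be*(A 1)*(B 0)*(C 1) + (-1)*be*(A 1)^2*(B 0) + (-1)*al*(A 0)*(C 1)^2 + (2)*al*(A 0)*(A 1)*(C 1) + (-1)*al*(A 0)*(A 1)^2 + (2)*(I 1)*(C 0)*(C 1) + (-2)*(I 1)*(A 1)*(C 0) + (-2)*(I 1)*(A 0)*(C 1) + (2)*(I 1)*(A 0)*(A 1) + (-1)*(I 0)*(C 1)^2 + (2)*(I 0)*(A 1)*(C 1) + (-1)*(I 0)*(A 1)^2) * hI0 +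
      ((2)*(A 1)*(C 0)^2 + (-2)*(A 0)*(C 0)*(C 1) + (-2)*(A 0)*(A 1)*(C 0) + (2)*(A 0)^2*(C 1) + ga*(C 0)^2*(C 1) + (-2)*ga*(A 1)*(C 0)^2 + (2)*ga*(A 0)*(A 1)*(C 0) + (-1)*ga*(A 0)^2*(C 1) + (-1)*be*(B 1)*(C 0)^2 + (2)*be*(B 0)*(C 0)*(C 1) + (-2)*be*(A 1)*(B 0)*(C 0) + (2)*be*(A 0)*(B 1)*(C 0) + (-2)*be*(A 0)*(B 0)*(C 1) + (2)*be*(A 0)*(A 1)*(B 0) + (-1)*be*(A 0)^2*(B 1) + (-1)*al*(A 1)*(C 0)^2 + (2)*al*(A 0)*(C 0)*(C 1) + (-2)*al*(A 0)^2*(C 1) + al*(A 0)^2*(A 1) + (-1)*(I 1)*(C 0)^2 + (2)*(I 1)*(A 0)*(C 0) + (-1)*(I 1)*(A 0)^2) * hI1 +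
      ((A 1)^2*(C 0)^2 + (-2)*(A 0)*(A 1)*(C 0)*(C 1) + (A 0)^2*(C 1)^2 + (-1)*ga*(A 1)^2*(C 0)^2 + (2)*ga*(A 0)*(A 1)*(C 0)*(C 1) + (-1)*ga*(A 0)^2*(C 1)^2 + (-2)*be*(A 1)*(B 1)*(C 0)^2 + (2)*be*(A 1)*(B 0)*(C 0)*(C 1) + be*(A 1)^2*(C 0)^2 + (-2)*be*(A 1)^2*(B 0)*(C 0) + (2)*be*(A 0)*(B 1)*(C 0)*(C 1) + (-2)*be*(A 0)*(B 0)*(C 1)^2 + (-2)*be*(A 0)*(A 1)*(C 0)*(C 1) + (2)*be*(A 0)*(A 1)*(B 1)*(C 0) + (2)*be*(A 0)*(A 1)*(B 0)*(C 1) + be*(A 0)^2*(C 1)^2 + (-2)*be*(A 0)^2*(B 1)*(C 1) + (-1)*al*(A 1)^2*(C 0)^2 + (2)*al*(A 0)*(A 1)*(C 0)*(C 1) + (-1)*al*(A 0)^2*(C 1)^2) * hsum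
  have hgamma : ga ^ 2 * ((B 0 - A 0) * (C 1 - A 1) - (B 1 - A 1) * (C 0 - A 0)) ^ 2 = r ^ 2 * c ^ 2 := by
    linear_combination (norm := ring1) (1) * EAB +
      (-r^2) * hc2 +
      ((-2)*(A 1)*(B 0)*(B 1) + (2)*(A 1)^2*(B 0) + (2)*(A 0)*(B 1)^2 + (-2)*(A 0)*(A 1)*(B 1) + (-1)*ga*(B 1)^2*(C 0) + (2)*ga*(A 1)*(B 1)*(C 0) + (-1)*ga*(A 1)^2*(C 0) + (-1)*be*(B 0)*(B 1)^2 + (2)*be*(A 1)*(B 0)*(B 1) + (-1)*be*(A 1)^2*(B 0) + (-1)*al*(A 0)*(B 1)^2 + (2)*al*(A 0)*(A 1)*(B 1) + (-1)*al*(A 0)*(A 1)^2 + (2)*(I 1)*(B 0)*(B 1) + (-2)*(I 1)*(A 1)*(B 0) + (-2)*(I 1)*(A 0)*(B 1) + (2)*(I 1)*(A 0)*(A 1) + (-1)*(I 0)*(B 1)^2 + (2)*(I 0)*(A 1)*(B 1) + (-1)*(I 0)*(A 1)^2) * hI0 +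
      ((2)*(A 1)*(B 0)^2 + (-2)*(A 0)*(B 0)*(B 1) + (-2)*(A 0)*(A 1)*(B 0) + (2)*(A 0)^2*(B 1) + (2)*ga*(B 0)*(B 1)*(C 0) + (-1)*ga*(B 0)^2*(C 1) + (-2)*ga*(A 1)*(B 0)*(C 0) + (-2)*ga*(A 0)*(B 1)*(C 0) + (2)*ga*(A 0)*(B 0)*(C 1) + (2)*ga*(A 0)*(A 1)*(C 0) + (-1)*ga*(A 0)^2*(C 1) + be*(B 0)^2*(B 1) + (-2)*be*(A 1)*(B 0)^2 + (2)*be*(A 0)*(A 1)*(B 0) + (-1)*be*(A 0)^2*(B 1) + (-1)*al*(A 1)*(B 0)^2 + (2)*al*(A 0)*(B 0)*(B 1) + (-2)*al*(A 0)^2*(B 1) + al*(A 0)^2*(A 1) + (-1)*(I 1)*(B 0)^2 + (2)*(I 1)*(A 0)*(B 0) + (-1)*(I 1)*(A 0)^2) * hI1 +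
      ((A 1)^2*(B 0)^2 + (-2)*(A 0)*(A 1)*(B 0)*(B 1) + (A 0)^2*(B 1)^2 + (2)*ga*(A 1)*(B 0)*(B 1)*(C 0) + (-2)*ga*(A 1)*(B 0)^2*(C 1) + (-2)*ga*(A 1)^2*(B 0)*(C 0) + ga*(A 1)^2*(B 0)^2 + (-2)*ga*(A 0)*(B 1)^2*(C 0) + (2)*ga*(A 0)*(B 0)*(B 1)*(C 1) + (2)*ga*(A 0)*(A 1)*(B 1)*(C 0) + (2)*ga*(A 0)*(A 1)*(B 0)*(C 1) + (-2)*ga*(A 0)*(A 1)*(B 0)*(B 1) + (-2)*ga*(A 0)^2*(B 1)*(C 1) + ga*(A 0)^2*(B 1)^2 + (-1)*be*(A 1)^2*(B 0)^2 + (2)*be*(A 0)*(A 1)*(B 0)*(B 1) + (-1)*be*(A 0)^2*(B 1)^2 + (-1)*al*(A 1)^2*(B 0)^2 + (2)*al*(A 0)*(A 1)*(B 0)*(B 1) + (-1)*al*(A 0)^2*(B 1)^2) * hsum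
  have habc2 : (a * b * c) ^ 2 = 4 * R ^ 2 * ((B 0 - A 0) * (C 1 - A 1) - (B 1 - A 1) * (C 0 - A 0)) ^ 2 := by
    linear_combination (norm := ring1) ((-3)*(C 1 - O 1)^2*R^2 + (C 1 - O 1)^4 + (C 0 - O 0)^2*R^2 + (2)*(C 0 - O 0)^2*(C 1 - O 1)^2 + (C 0 - O 0)^4 + (6)*(B 1 - O 1)*(C 1 - O 1)*R^2 + (-2)*(B 1 - O 1)*(C 1 - O 1)^3 + (-2)*(B 1 - O 1)*(C 0 - O 0)^2*(C 1 - O 1) + (-3)*(B 1 - O 1)^2*R^2 + (2)*(B 1 - O 1)^2*(C 1 - O 1)^2 + (2)*(B 1 - O 1)^2*(C 0 - O 0)^2 + (-2)*(B 1 - O 1)^3*(C 1 - O 1) + (B 1 - O 1)^4 + (-2)*(B 0 - O 0)*(C 0 - O 0)*R^2 + (2)*(B 0 - O 0)*(C 0 - O 0)*(C 1 - O 1)^2 + (2)*(B 0 - O 0)*(C 0 - O 0)^3 + (-8)*(B 0 - O 0)*(B 1 - O 1)*(C 0 - O 0)*(C 1 - O 1) + (2)*(B 0 - O 0)*(B 1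 - O 1)^2*(C 0 - O 0) + (B 0 - O 0)^2*R^2 + (2)*(B 0 - O 0)^2*(C 1 - O 1)^2 + (-6)*(B 0 - O 0)^2*(C 0 - O 0)^2 + (-2)*(B 0 - O 0)^2*(B 1 - O 1)*(C 1 - O 1) + (2)*(B 0 - O 0)^2*(B 1 - O 1)^2 + (2)*(B 0 - O 0)^3*(C 0 - O 0) + (B 0 - O 0)^4 + (-2)*(A 1 - O 1)*(C 1 - O 1)^3 + (-2)*(A 1 - O 1)*(C 0 - O 0)^2*(C 1 - O 1) + (2)*(A 1 - O 1)*(B 1 - O 1)*(C 1 - O 1)^2 + (-2)*(A 1 - O 1)*(B 1 - O 1)*(C 0 - O 0)^2 + (2)*(A 1 - O 1)*(B 1 - O 1)^2*(C 1 - O 1) + (-2)*(A 1 - O 1)*(B 1 - O 1)^3 + (4)*(A 1 - O 1)*(B 0 - O 0)*(C 0 - O 0)*(C 1 - O 1) + (4)*(A 1 - O 1)*(B 0 - O 0)*(B 1 - O 1)*(C 0 - O 0) + (-2)*(A 1 - O 1)*(B 0 - O 0)^2*(C 1 - O 1) + (-2)*(A 1 - O 1)*(B 0 - O 0)^2*(B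 1 - O 1) + (A 1 - O 1)^2*(C 1 - O 1)^2 + (A 1 - O 1)^2*(C 0 - O 0)^2 + (-2)*(A 1 - O 1)^2*(B 1 - O 1)*(C 1 - O 1) + (A 1 - O 1)^2*(B 1 - O 1)^2 + (-2)*(A 1 - O 1)^2*(B 0 - O 0)*(C 0 - O 0) + (A 1 - O 1)^2*(B 0 - O 0)^2 + (-2)*(A 0 - O 0)*(C 0 - O 0)*(C 1 - O 1)^2 + (-2)*(A 0 - O 0)*(C 0 - O 0)^3 + (4)*(A 0 - O 0)*(B 1 - O 1)*(C 0 - O 0)*(C 1 - O 1) + (-2)*(A 0 - O 0)*(B 1 - O 1)^2*(C 0 - O 0) + (-2)*(A 0 - O 0)*(B 0 - O 0)*(C 1 - O 1)^2 + (2)*(A 0 - O 0)*(B 0 - O 0)*(C 0 - O 0)^2 + (4)*(A 0 - O 0)*(B 0 - O 0)*(B 1 - O 1)*(C 1 - O 1) + (-2)*(A 0 - O 0)*(B 0 - O 0)*(B 1 - O 1)^2 + (2)*(A 0 - O 0)*(B 0 - O 0)^2*(C 0 - O 0) + (-2)*(A 0 - O 0)*(B 0 - O 0)^3 + (A 0 -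 O 0)^2*(C 1 - O 1)^2 + (A 0 - O 0)^2*(C 0 - O 0)^2 + (-2)*(A 0 - O 0)^2*(B 1 - O 1)*(C 1 - O 1) + (A 0 - O 0)^2*(B 1 - O 1)^2 + (-2)*(A 0 - O 0)^2*(B 0 - O 0)*(C 0 - O 0) + (A 0 - O 0)^2*(B 0 - O 0)^2) * hA +
      ((2)*R^2^2 + (-1)*(C 1 - O 1)^2*R^2 + (C 1 - O 1)^4 + (-5)*(C 0 - O 0)^2*R^2 + (2)*(C 0 - O 0)^2*(C 1 - O 1)^2 + (C 0 - O 0)^4 + (-2)*(B 1 - O 1)*(C 1 - O 1)*R^2 + (-2)*(B 1 - O 1)*(C 1 - O 1)^3 + (-2)*(B 1 - O 1)*(C 0 - O 0)^2*(C 1 - O 1) + (B 1 - O 1)^2*R^2 + (B 1 - O 1)^2*(C 1 - O 1)^2 + (B 1 - O 1)^2*(C 0 - O 0)^2 + (2)*(B 0 - O 0)*(C 0 - O 0)*R^2 + (-2)*(B 0 - O 0)*(C 0 - O 0)*(C 1 - O 1)^2 + (-2)*(B 0 - O 0)*(C 0 - O 0)^3 + (B 0 - O 0)^2*R^2 + (B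 0 - O 0)^2*(C 1 - O 1)^2 + (B 0 - O 0)^2*(C 0 - O 0)^2 + (4)*(A 1 - O 1)*(C 1 - O 1)*R^2 + (-2)*(A 1 - O 1)*(C 1 - O 1)^3 + (-2)*(A 1 - O 1)*(C 0 - O 0)^2*(C 1 - O 1) + (-2)*(A 1 - O 1)*(B 1 - O 1)*R^2 + (2)*(A 1 - O 1)*(B 1 - O 1)*(C 1 - O 1)^2 + (-2)*(A 1 - O 1)*(B 1 - O 1)*(C 0 - O 0)^2 + (-2)*(A 1 - O 1)*(B 1 - O 1)^2*(C 1 - O 1) + (4)*(A 1 - O 1)*(B 0 - O 0)*(C 0 - O 0)*(C 1 - O 1) + (-2)*(A 1 - O 1)*(B 0 - O 0)^2*(C 1 - O 1) + (-4)*(A 1 - O 1)^2*R^2 + (8)*(A 1 - O 1)^2*(C 0 - O 0)^2 + (4)*(A 1 - O 1)^2*(B 1 - O 1)*(C 1 - O 1) + (-4)*(A 1 - O 1)^2*(B 0 - O 0)*(C 0 - O 0) + (2)*(A 0 - O 0)*(C 0 - O 0)*(C 1 - O 1)^2 + (2)*(A 0 - O 0)*(C 0 - O 0)^3 + (4)*(A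 0 - O 0)*(B 1 - O 1)*(C 0 - O 0)*(C 1 - O 1) + (-2)*(A 0 - O 0)*(B 1 - O 1)^2*(C 0 - O 0) + (-2)*(A 0 - O 0)*(B 0 - O 0)*R^2 + (-2)*(A 0 - O 0)*(B 0 - O 0)*(C 1 - O 1)^2 + (2)*(A 0 - O 0)*(B 0 - O 0)*(C 0 - O 0)^2 + (-2)*(A 0 - O 0)*(B 0 - O 0)^2*(C 0 - O 0) + (-8)*(A 0 - O 0)*(A 1 - O 1)*(C 0 - O 0)*(C 1 - O 1) + (4)*(A 0 - O 0)*(A 1 - O 1)*(B 1 - O 1)*(C 0 - O 0) + (4)*(A 0 - O 0)*(A 1 - O 1)*(B 0 - O 0)*(C 1 - O 1)) * hB +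
      ((-2)*R^2^2 + (2)*(C 1 - O 1)^2*R^2 + (2)*(C 0 - O 0)^2*R^2 + (-4)*(B 1 - O 1)*(C 1 - O 1)*R^2 + (4)*(B 1 - O 1)^2*R^2 + (-4)*(A 1 - O 1)*(C 1 - O 1)*R^2 + (2)*(A 1 - O 1)*(B 1 - O 1)*R^2 + (-2)*(A 1 - O 1)*(B 1 - O 1)*(C 1 - O 1)^2 + (-2)*(A 1 - O 1)*(B 1 - O 1)*(C 0 - O 0)^2 + (4)*(A 1 - O 1)*(B 1 - O 1)^2*(C 1 - O 1) + (4)*(A 1 - O 1)*(B 0 - O 0)*(B 1 - O 1)*(C 0 - O 0) + (4)*(A 1 - O 1)^2*R^2 + (4)*(A 1 - O 1)^2*(B 1 - O 1)*(C 1 - O 1) + (-8)*(A 1 - O 1)^2*(B 1 - O 1)^2 + (-4)*(A 1 - O 1)^2*(B 0 - O 0)*(C 0 - O 0) + (-4)*(A 0 - O 0)*(B 1 - O 1)^2*(C 0 - O 0) + (2)*(A 0 - O 0)*(B 0 - O 0)*R^2 + (-2)*(A 0 - O 0)*(B 0 - O 0)*(C 1 - O 1)^2 + (-2)*(A 0 -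 O 0)*(B 0 - O 0)*(C 0 - O 0)^2 + (4)*(A 0 - O 0)*(B 0 - O 0)*(B 1 - O 1)*(C 1 - O 1) + (4)*(A 0 - O 0)*(A 1 - O 1)*(B 1 - O 1)*(C 0 - O 0) + (4)*(A 0 - O 0)*(A 1 - O 1)*(B 0 - O 0)*(C 1 - O 1) + (-8)*(A 0 - O 0)*(A 1 - O 1)*(B 0 - O 0)*(B 1 - O 1)) * hC +
      (b^2*c^2) * ha2 + (((B 0 - C 0)^2+(B 1 - C 1)^2)*c^2) * hb2 + (((B 0 - C 0)^2+(B 1 - C 1)^2)*((C 0 - A 0)^2+(C 1 - A 1)^2)) * hc2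
  have hRd : (dist O I) ^ 2 = R ^ 2 - (al * be * c ^ 2 + be * ga * a ^ 2 + ga * al * b ^ 2) := by
    linear_combination (norm := ring1) ((1)) * hd2 +
      ((-2)*(O 0) + (C 0)*ga + (B 0)*be + al*(A 0) + (I 0)) * hI0 +
      ((-2)*(O 1) + (C 1)*ga + (B 1)*be + al*(A 1) + (I 1)) * hI1 +
      (be*ga) * ha2 +
      (al*ga) * hb2 +
      (al*be) * hc2 +
      ((C 1)^2*ga + (C 0)^2*ga + (B 1)^2*be + (B 0)^2*be + (-2)*(A 1)*(O 1) + (A 1)^2 + (-2)*(A 0)*(O 0) + (A 0)^2 + al*(A 1)^2 + al*(A 0)^2) * hsum +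
      ((1) + (-1)*ga + (-1)*be) * hA +
      (be) * hB +
      (ga) * hC
  obtain ⟨dete, hdete⟩ : ∃ x : ℝ, x = (B 0 - A 0) * (C 1 - A 1) - (B 1 - A 1) * (C 0 - A 0) := ⟨_, rfl⟩
  rw [← hdete] at halpha hbeta hgamma habc2
  have hab : al * be * dete ^ 2 = r ^ 2 * (a * b) := by
    refine sq_eq_of_nonneg (mul_nonneg (mul_nonneg hal hbe) (sq_nonneg dete))
      (mul_nonneg (sq_nonneg r) (mul_nonneg ha0 hb0)) ?_
    linear_combination (be ^ 2 * dete ^ 2) * halpha + (r ^ 2 * a ^ 2) * hbeta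
  have hbc : be * ga * dete ^ 2 = r ^ 2 * (b * c) := by
    refine sq_eq_of_nonneg (mul_nonneg (mul_nonneg hbe hga) (sq_nonneg dete))
      (mul_nonneg (sq_nonneg r) (mul_nonneg hb0 hc0)) ?_
    linear_combination (ga ^ 2 * dete ^ 2) * hbeta + (r ^ 2 * b ^ 2) * hgamma
  have hca : ga * al * dete ^ 2 = r ^ 2 * (c * a) := by
    refine sq_eq_of_nonneg (mul_nonneg (mul_nonneg hga hal) (sq_nonneg dete))
      (mul_nonneg (sq_nonneg r) (mul_nonneg hc0 ha0)) ?_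
    linear_combination (al ^ 2 * dete ^ 2) * hgamma + (r ^ 2 * c ^ 2) * halpha
  have hdets : dete ^ 2 = r ^ 2 * (a + b + c) ^ 2 := by
    linear_combination halpha + hbeta + hgamma + 2 * hab + 2 * hbc + 2 * hca
      - (dete ^ 2 * (al + be + ga + 1)) * hsum
  have hR0 : (0:ℝ) ≤ R := hOA ▸ dist_nonneg
  have hSpos : 0 < a + b + c := by linarith
  have habc3 : a * b * c = 2 * R * (r * (a + b + c)) := by
    refine sq_eq_of_nonneg (mul_nonneg (mul_nonneg ha0 hb0) hc0)
      (mul_nonneg (by linarith) (mul_nonneg hr.le hSpos.le)) ?_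
    linear_combination habc2 + 4 * R ^ 2 * hdets
  have h1 : (R ^ 2 - (dist O I) ^ 2) * dete ^ 2 = r ^ 2 * (a * b * c) * (a + b + c) := by
    linear_combination (-(dete ^ 2)) * hRd + c ^ 2 * hab + a ^ 2 * hbc + b ^ 2 * hca
  have h2 : (R ^ 2 - (dist O I) ^ 2) * (r ^ 2 * (a + b + c) ^ 2)
      = r ^ 2 * (a * b * c) * (a + b + c) := by
    linear_combination h1 - (R ^ 2 - (dist O I) ^ 2) * hdets
  have h3 : (R ^ 2 - (dist O I) ^ 2) * (r ^ 2 * (a + b + c) ^ 2)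
      = (2 * R * r) * (r ^ 2 * (a + b + c) ^ 2) := by
    linear_combination h2 + (r ^ 2 * (a + b + c)) * habc3
  exact mul_right_cancel₀ (ne_of_gt (mul_pos (pow_pos hr 2) (pow_pos hSpos 2))) h3
end

section
/- If r > 0 and t₁,…,t₅ > 0 satisfy ∑ᵢ arctan(tᵢ/r) ∈ {π, 2π}, then x = r is a root of the biquadratic Sylvester equation s₁x⁴ − s₃x² + s₅ = 0, where sₖ is the k-th elementary symmetric polynomial in t₁,…,t₅. -/
/-!
Writing `r + tᵢ i = (r / cos θᵢ) e^{i θᵢ}` with `θᵢ = arctan (tᵢ / r)`, the product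
`∏ (r + tᵢ i)` is a real multiple of `e^{i ∑ θᵢ}`, hence real when `∑ θᵢ ∈ πℤ`. Its imaginary
part, expanded, is `s₁ r⁴ − s₃ r² + s₅`.
-/

open Real Finset

namespace Complex

theorem ofReal_add_mul_I_eq_mul_exp_arctan {r : ℝ} (hr : r ≠ 0) (t : ℝ) :
    (r + t * I : ℂ) =
      ↑(r / Real.cos (Real.arctan (t / r))) * exp (↑(Real.arctan (t / r)) * I) := by
  set θ := Real.arctan (t / r)
  have hcos : Real.cos θ ≠ 0 := (cos_arctan_pos _).ne'
  have hsin : Real.sin θ = t / r * Real.cos θ := by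
    rw [← Real.tan_arctan (t / r), Real.tan_eq_sin_div_cos, div_mul_cancel₀ _ hcos]
  have hcos' : (Real.cos θ : ℂ) ≠ 0 := ofReal_ne_zero.mpr hcos
  have hr' : (r : ℂ) ≠ 0 := ofReal_ne_zero.mpr hr
  rw [exp_mul_I, ← ofReal_cos, ← ofReal_sin, hsin, ofReal_mul, ofReal_div, ofReal_div]
  field_simp

theorem im_prod_ofReal_add_mul_I_eq_zero {ι : Type*} (s : Finset ι) (t : ι → ℝ) {r : ℝ}
    (hr : r ≠ 0) (hsin : Real.sin (∑ i ∈ s, Real.arctan (t i / r)) = 0) :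
    (∏ i ∈ s, ((r : ℂ) + t i * I)).im = 0 := by
  simp_rw [ofReal_add_mul_I_eq_mul_exp_arctan hr, prod_mul_distrib, ← ofReal_prod, ← exp_sum,
    ← sum_mul, ← ofReal_sum, im_ofReal_mul, exp_ofReal_mul_I_im, hsin, mul_zero]

theorem im_prod_five_ofReal_add_mul_I (t₁ t₂ t₃ t₄ t₅ r : ℝ) :
    ((r + t₁ * I) * (r + t₂ * I) * (r + t₃ * I) * (r + t₄ * I) * (r + t₅ * I) : ℂ).im =
      (t₁ + t₂ + t₃ + t₄ + t₅) * r ^ 4 -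
        (t₁*t₂*t₃ + t₁*t₂*t₄ + t₁*t₂*t₅ + t₁*t₃*t₄ + t₁*t₃*t₅ + t₁*t₄*t₅ +
          t₂*t₃*t₄ + t₂*t₃*t₅ + t₂*t₄*t₅ + t₃*t₄*t₅) * r ^ 2 +
        t₁*t₂*t₃*t₄*t₅ := by
  simp only [mul_re, mul_im, add_re, add_im, ofReal_re, ofReal_im, I_re, I_im]
  ring

end Complex

theorem sylvester_equation_of_arctan_sum_general (t₁ t₂ t₃ t₄ t₅ r : ℝ) (hr : 0 < r)
    (hsum : arctan (t₁ / r) + arctan (t₂ / r) + arctan (t₃ / r) + arctan (t₄ / r) +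
        arctan (t₅ / r) = π ∨
      arctan (t₁ / r) + arctan (t₂ / r) + arctan (t₃ / r) + arctan (t₄ / r) +
        arctan (t₅ / r) = 2 * π) :
    (t₁ + t₂ + t₃ + t₄ + t₅) * r ^ 4 -
      (t₁*t₂*t₃ + t₁*t₂*t₄ + t₁*t₂*t₅ + t₁*t₃*t₄ + t₁*t₃*t₅ + t₁*t₄*t₅ +
        t₂*t₃*t₄ + t₂*t₃*t₅ + t₂*t₄*t₅ + t₃*t₄*t₅) * r ^ 2 +
      t₁*t₂*t₃*t₄*t₅ = 0 := by
  have hsin : Real.sin (∑ i, arctan (![t₁, t₂, t₃, t₄, t₅] i / r)) = 0 := by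
    rw [Fin.sum_univ_five]
    rcases hsum with h | h <;> simp [h]
  have him := Complex.im_prod_ofReal_add_mul_I_eq_zero univ ![t₁, t₂, t₃, t₄, t₅] hr.ne' hsin
  rwa [Fin.prod_univ_five, Complex.im_prod_five_ofReal_add_mul_I] at him

/-- If r > 0 and t₁,…,t₅ > 0 satisfy ∑ arctan(tᵢ/r) ∈ {π, 2π}, then r is a root of the
biquadratic Sylvester equation s₁x⁴ − s₃x² + s₅ = 0. -/
theorem sylvester_equation_of_arctan_sum (t₁ t₂ t₃ t₄ t₅ r : ℝ)
    (ht₁ : 0 < t₁) (ht₂ : 0 < t₂) (ht₃ : 0 < t₃) (ht₄ : 0 < t₄) (ht₅ : 0 < t₅) (hr : 0 < r)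
    (hsum : arctan (t₁ / r) + arctan (t₂ / r) + arctan (t₃ / r) + arctan (t₄ / r) +
        arctan (t₅ / r) = π ∨
      arctan (t₁ / r) + arctan (t₂ / r) + arctan (t₃ / r) + arctan (t₄ / r) +
        arctan (t₅ / r) = 2 * π) :
    (t₁ + t₂ + t₃ + t₄ + t₅) * r ^ 4 -
      (t₁*t₂*t₃ + t₁*t₂*t₄ + t₁*t₂*t₅ + t₁*t₃*t₄ + t₁*t₃*t₅ + t₁*t₄*t₅ +
        t₂*t₃*t₄ + t₂*t₃*t₅ + t₂*t₄*t₅ + t₃*t₄*t₅) * r ^ 2 +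
      t₁*t₂*t₃*t₄*t₅ = 0 :=
  sylvester_equation_of_arctan_sum_general t₁ t₂ t₃ t₄ t₅ r hr hsum
end
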